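/- arXiv:2605.06883 — 2 statements merged into one kernel-verified Lean document; each statement's English description precedes it below -/
import Mathlib

section
/- For the unbiased MMD U-statistic estimator with a kernel bounded by 0 ≤ k ≤ ν, a swap of a single X-coordinate X_l ↦ X_l' changes the value of the estimator by at most 4ν/m, where m is the X-sample size. -/
/-!
Replacing `X l` changes, in the within-sample sum, only the `2 (m - 1)` off-diagonal pairs that
involve `l`, and in the cross sum only the `n` pairs of row `l`; each term moves by at most `ν`
because `k` takes values in `[0, ν]`. After the normalisations `1 / (m (m - 1))` and `2 / (m n)`
each of the two parts contributes at most `2 ν / m`.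
-/

open Finset

/-- Unbiased MMD U-statistic estimator. -/
noncomputable def mmdU {U : Type*} (k : U → U → ℝ) {m n : ℕ}
    (X : Fin m → U) (Y : Fin n → U) : ℝ :=
  (∑ i, ∑ j, if i ≠ j then k (X i) (X j) else 0) / ((m : ℝ) * ((m : ℝ) - 1))
    + (∑ i, ∑ j, if i ≠ j then k (Y i) (Y j) else 0) / ((n : ℝ) * ((n : ℝ) - 1))
    - (2 / ((m : ℝ) * (n : ℝ))) * ∑ i, ∑ j, k (X i) (Y j)

lemma Finset.abs_sum_le_card_mul {ι : Type*} {s : Finset ι} {f : ι → ℝ} {ν : ℝ}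
    (h : ∀ i ∈ s, |f i| ≤ ν) : |∑ i ∈ s, f i| ≤ #s * ν := by
  simpa using (abs_sum_le_sum_abs f s).trans (s.sum_le_card_nsmul _ ν h)

lemma abs_div_mul_le {a b c d : ℝ} (hb : 0 ≤ b) (hc : 0 ≤ c) (hd : 0 ≤ d) (ha : |a| ≤ c * d) :
    |a / (b * c)| ≤ d / b := by
  rw [abs_div, abs_of_nonneg (mul_nonneg hb hc)]
  calc |a| / (b * c) ≤ c * d / (b * c) := div_le_div_of_nonneg_right ha (mul_nonneg hb hc)
    _ = d / b * (c / c) := by ring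
    -- `c / c ≤ 1` holds even for `c = 0` (junk division): the cases `m = 1` and `n = 0`.
    _ ≤ d / b := mul_le_of_le_one_right (div_nonneg hd hb) (div_self_le_one c)

section OffDiagonal

variable {ι κ M : Type*} [Fintype ι] [Fintype κ]

def offDiagSum [DecidableEq ι] [AddCommMonoid M] (F : ι → ι → M) : M :=
  ∑ i, ∑ j, if i ≠ j then F i j else 0

variable [DecidableEq ι]

lemma offDiagSum_sub [AddCommGroup M] (F G : ι → ι → M) :
    offDiagSum F - offDiagSum G = offDiagSum (fun i j => F i j - G i j) := by
  simp only [offDiagSum, ← sum_sub_distrib, ite_sub_ite, sub_zero]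

lemma offDiagSum_eq_row_add_col [AddCommMonoid M] {D : ι → ι → M} (l : ι)
    (hD : ∀ i j, i ≠ l → j ≠ l → D i j = 0) :
    offDiagSum D = ∑ j ∈ {l}ᶜ, D l j + ∑ i ∈ {l}ᶜ, D i l := by
  rw [offDiagSum, Fintype.sum_eq_add_sum_compl l]
  congr 1
  · rw [Fintype.sum_eq_add_sum_compl l, if_neg (not_not_intro rfl), zero_add]
    exact sum_congr rfl fun j hj => if_pos (Ne.symm (by simpa using hj))
  · refine sum_congr rfl fun i hi => ?_
    have hil : i ≠ l := by simpa using hi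
    rw [Fintype.sum_eq_single l fun j hjl => by simp [hD i j hil hjl], if_pos hil]

lemma abs_offDiagSum_le {D : ι → ι → ℝ} {ν : ℝ} (l : ι)
    (hD : ∀ i j, i ≠ l → j ≠ l → D i j = 0) (hν : ∀ i j, |D i j| ≤ ν) :
    |offDiagSum D| ≤ 2 * ((Fintype.card ι : ℝ) - 1) * ν := by
  have hcard : (#({l}ᶜ : Finset ι) : ℝ) = Fintype.card ι - 1 := by
    rw [card_compl, card_singleton, Nat.cast_pred (Fintype.card_pos_iff.2 ⟨l⟩)]
  rw [offDiagSum_eq_row_add_col l hD]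
  calc _ ≤ |∑ j ∈ {l}ᶜ, D l j| + |∑ i ∈ {l}ᶜ, D i l| := abs_add_le _ _
    _ ≤ #({l}ᶜ : Finset ι) * ν + #({l}ᶜ : Finset ι) * ν :=
      add_le_add (abs_sum_le_card_mul fun j _ => hν l j) (abs_sum_le_card_mul fun i _ => hν i l)
    _ = 2 * ((Fintype.card ι : ℝ) - 1) * ν := by rw [hcard]; ring

omit [DecidableEq ι] in
lemma abs_sum_sum_le_of_eq_zero_off_row {D : ι → κ → ℝ} {ν : ℝ} (l : ι)
    (hD : ∀ i, i ≠ l → ∀ j, D i j = 0) (hν : ∀ j, |D l j| ≤ ν) :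
    |∑ i, ∑ j, D i j| ≤ Fintype.card κ * ν := by
  rw [Fintype.sum_eq_single l fun i hi => by simp [hD i hi]]
  exact abs_sum_le_card_mul fun j _ => hν j

end OffDiagonal

theorem mmdU_single_swap_bounded_general {U : Type*} (k : U → U → ℝ) (ν : ℝ)
    (hk : ∀ u u', 0 ≤ k u u' ∧ k u u' ≤ ν)
    {m n : ℕ}
    (X : Fin m → U) (Y : Fin n → U) (l : Fin m) (x' : U) :
    |mmdU k (Function.update X l x') Y - mmdU k X Y| ≤ 4 * ν / m := by
  set X' := Function.update X l x'
  have hν : 0 ≤ ν := (hk x' x').1.trans (hk x' x').2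
  have hk_sub : ∀ u v u' v', |k u v - k u' v'| ≤ ν := fun u v u' v' =>
    abs_sub_le_of_nonneg_of_le (hk u v).1 (hk u v).2 (hk u' v').1 (hk u' v').2
  have hX' : ∀ i, i ≠ l → X' i = X i := fun i hi => Function.update_of_ne hi _ _
  have hS : |offDiagSum (fun i j => k (X' i) (X' j)) - offDiagSum (fun i j => k (X i) (X j))|
      ≤ 2 * ((m : ℝ) - 1) * ν := by
    rw [offDiagSum_sub]
    simpa only [Fintype.card_fin] using abs_offDiagSum_le
      (D := fun i j => k (X' i) (X' j) - k (X i) (X j)) l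
      (fun i j hi hj => by simp only [hX' i hi, hX' j hj, sub_self]) fun i j => hk_sub _ _ _ _
  have hT : |2 * (∑ i, ∑ j, k (X' i) (Y j) - ∑ i, ∑ j, k (X i) (Y j))| ≤ n * (2 * ν) := by
    rw [abs_mul, abs_two, mul_left_comm]
    gcongr
    simp only [← sum_sub_distrib]
    simpa only [Fintype.card_fin] using abs_sum_sum_le_of_eq_zero_off_row
      (D := fun i j => k (X' i) (Y j) - k (X i) (Y j)) l
      (fun i hi j => by simp only [hX' i hi, sub_self]) fun j => hk_sub _ _ _ _
  have hdiff : mmdU k X' Y - mmdU k X Y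
      = (offDiagSum (fun i j => k (X' i) (X' j)) - offDiagSum (fun i j => k (X i) (X j)))
          / (m * (m - 1))
        - 2 * (∑ i, ∑ j, k (X' i) (Y j) - ∑ i, ∑ j, k (X i) (Y j)) / (m * n) := by
    simp only [mmdU, offDiagSum]
    ring
  have hm : (0 : ℝ) ≤ m - 1 := sub_nonneg.2 (Nat.one_le_cast.2 l.pos)
  calc |mmdU k X' Y - mmdU k X Y| ≤ 2 * ν / m + 2 * ν / m := by
        rw [hdiff]
        refine (abs_sub _ _).trans (add_le_add ?_ ?_)
        · exact abs_div_mul_le (by positivity) hm (by positivity) (hS.trans_eq (by ring))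
        · exact abs_div_mul_le (by positivity) (by positivity) (by positivity) hT
    _ = 4 * ν / m := by ring

/-- A swap of a single X-coordinate changes the bounded-kernel unbiased MMD
estimator by at most `4ν/m`. -/
theorem mmdU_single_swap_bounded {U : Type*} (k : U → U → ℝ) (ν : ℝ)
    (hk : ∀ u u', 0 ≤ k u u' ∧ k u u' ≤ ν)
    {m n : ℕ} (hm : 2 ≤ m) (hn : 2 ≤ n)
    (X : Fin m → U) (Y : Fin n → U) (l : Fin m) (x' : U) :
    |mmdU k (Function.update X l x') Y - mmdU k X Y| ≤ 4 * ν / m :=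
  mmdU_single_swap_bounded_general k ν hk X Y l x'
end

section
/- For the unbiased MMD U-statistic estimator with a kernel that is l-Lipschitz in each argument, a swap of a single X-coordinate X_l ↦ X_l' changes the value of the estimator by at most (4l/m)·‖X_l − X_l'‖. -/
open Finset

/-!
By the triangle inequality through `k v u'`, a kernel value `k u u'` moves by at most
`l‖u - v‖ + l‖u' - v'‖`. Every `X_i` occurs in `2(m-1)` of the `m(m-1)` within-sample terms and
in `n` of the `mn` cross terms, so the estimator is `(4l/m)`-Lipschitz for the `ℓ¹` distance of
the `X`-samples, and a single swap moves them by `‖X_l - X_l'‖` in that distance.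
-/

theorem sum_sum_ite_ne_add {ι R : Type*} [Fintype ι] [DecidableEq ι] [CommRing R] (a : ι → R) :
    ∑ i, ∑ j, (if i ≠ j then a i + a j else 0) = 2 * (Fintype.card ι - 1) * ∑ i, a i := by
  have h : ∀ i j, (if i ≠ j then a i + a j else 0) = a i + a j - if i = j then a i + a j else 0 :=
    fun i j => by by_cases hij : i = j <;> simp [hij]
  simp only [h, sum_sub_distrib, sum_add_distrib, sum_ite_eq, mem_univ, if_true, sum_const,
    card_univ, nsmul_eq_mul, ← mul_sum]
  ring

section Lipschitz

variable {U : Type*} [NormedAddCommGroup U] {k : U → U → ℝ} {l : ℝ}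

theorem abs_sub_le_of_lipschitz_left_right
    (hk1 : ∀ u v u', |k u u' - k v u'| ≤ l * ‖u - v‖)
    (hk2 : ∀ u u' v', |k u u' - k u v'| ≤ l * ‖u' - v'‖) (u v u' v' : U) :
    |k u u' - k v v'| ≤ l * ‖u - v‖ + l * ‖u' - v'‖ :=
  calc |k u u' - k v v'| = |(k u u' - k v u') + (k v u' - k v v')| := by ring_nf
    _ ≤ |k u u' - k v u'| + |k v u' - k v v'| := abs_add_le _ _
    _ ≤ l * ‖u - v‖ + l * ‖u' - v'‖ := add_le_add (hk1 u v u') (hk2 v u' v')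

variable {ι κ : Type*} [Fintype ι] [Fintype κ]

theorem abs_sum_offDiag_sub_le [DecidableEq ι]
    (hk1 : ∀ u v u', |k u u' - k v u'| ≤ l * ‖u - v‖)
    (hk2 : ∀ u u' v', |k u u' - k u v'| ≤ l * ‖u' - v'‖) (X X' : ι → U) :
    |(∑ i, ∑ j, if i ≠ j then k (X' i) (X' j) else 0)
        - ∑ i, ∑ j, if i ≠ j then k (X i) (X j) else 0|
      ≤ 2 * (Fintype.card ι - 1) * (l * ∑ i, ‖X' i - X i‖) := by
  rw [mul_sum, ← sum_sum_ite_ne_add, ← sum_sub_distrib]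
  refine (abs_sum_le_sum_abs _ _).trans (sum_le_sum fun i _ => ?_)
  rw [← sum_sub_distrib]
  refine (abs_sum_le_sum_abs _ _).trans (sum_le_sum fun j _ => ?_)
  split_ifs
  · exact abs_sub_le_of_lipschitz_left_right hk1 hk2 _ _ _ _
  · simp

theorem abs_sum_sum_sub_le_of_lipschitz_left
    (hk1 : ∀ u v u', |k u u' - k v u'| ≤ l * ‖u - v‖) (X X' : ι → U) (Y : κ → U) :
    |∑ i, ∑ j, k (X' i) (Y j) - ∑ i, ∑ j, k (X i) (Y j)|
      ≤ Fintype.card κ * (l * ∑ i, ‖X' i - X i‖) := by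
  calc |∑ i, ∑ j, k (X' i) (Y j) - ∑ i, ∑ j, k (X i) (Y j)|
      ≤ ∑ i, ∑ j, |k (X' i) (Y j) - k (X i) (Y j)| := by
        rw [← sum_sub_distrib]
        refine (abs_sum_le_sum_abs _ _).trans (sum_le_sum fun i _ => ?_)
        rw [← sum_sub_distrib]
        exact abs_sum_le_sum_abs _ _
    _ ≤ ∑ i, ∑ _j : κ, l * ‖X' i - X i‖ := by gcongr with i _ j _; exact hk1 _ _ _
    _ = Fintype.card κ * (l * ∑ i, ‖X' i - X i‖) := by
        simp only [sum_const, card_univ, nsmul_eq_mul, ← mul_sum]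

theorem abs_mmdU_sub_le (hk1 : ∀ u v u', |k u u' - k v u'| ≤ l * ‖u - v‖)
    (hk2 : ∀ u u' v', |k u u' - k u v'| ≤ l * ‖u' - v'‖) {m n : ℕ} (hm : 2 ≤ m) (hn : 0 < n)
    (X X' : Fin m → U) (Y : Fin n → U) :
    |mmdU k X' Y - mmdU k X Y| ≤ 4 * l / m * ∑ i, ‖X' i - X i‖ := by
  set D := l * ∑ i, ‖X' i - X i‖
  have hXX := abs_sum_offDiag_sub_le hk1 hk2 X X'
  have hXY := abs_sum_sum_sub_le_of_lipschitz_left hk1 X X' Y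
  simp only [Fintype.card_fin] at hXX hXY
  have hm1 : (1 : ℝ) < m := by exact_mod_cast hm
  have hn0 : (0 : ℝ) < n := by exact_mod_cast hn
  have hdiff : mmdU k X' Y - mmdU k X Y =
      ((∑ i, ∑ j, if i ≠ j then k (X' i) (X' j) else 0)
        - ∑ i, ∑ j, if i ≠ j then k (X i) (X j) else 0) / (m * (m - 1))
      - 2 / (m * n) * (∑ i, ∑ j, k (X' i) (Y j) - ∑ i, ∑ j, k (X i) (Y j)) := by
    unfold mmdU; ring
  calc |mmdU k X' Y - mmdU k X Y|
      ≤ 2 * (m - 1) * D / (m * (m - 1)) + 2 / (m * n) * (n * D) := by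
        rw [hdiff]
        refine (abs_sub _ _).trans (add_le_add ?_ ?_)
        · rw [abs_div, abs_of_pos (show (0 : ℝ) < m * (m - 1) by nlinarith)]
          exact div_le_div_of_nonneg_right hXX (by nlinarith)
        · rw [abs_mul, abs_of_pos (by positivity)]
          gcongr
    _ = 4 * l / m * ∑ i, ‖X' i - X i‖ := by
        field_simp [(by linarith : (m : ℝ) - 1 ≠ 0)]
        ring

end Lipschitz

theorem sum_norm_update_sub {ι U : Type*} [Fintype ι] [DecidableEq ι] [NormedAddCommGroup U]
    (X : ι → U) (a : ι) (x' : U) :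
    ∑ i, ‖Function.update X a x' i - X i‖ = ‖x' - X a‖ := by
  rw [sum_eq_single a (fun i _ hi => by simp [hi]) (by simp)]
  simp

/-- A swap of a single X-coordinate changes the `l`-Lipschitz-kernel unbiased
MMD estimator by at most `(4l/m)·‖X_l − X_l'‖`. -/
theorem mmdU_single_swap_lipschitz {U : Type*} [NormedAddCommGroup U]
    (k : U → U → ℝ) (l : ℝ)
    (hk1 : ∀ u v u', |k u u' - k v u'| ≤ l * ‖u - v‖)
    (hk2 : ∀ u u' v', |k u u' - k u v'| ≤ l * ‖u' - v'‖)
    {m n : ℕ} (hm : 2 ≤ m) (hn : 2 ≤ n)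
    (X : Fin m → U) (Y : Fin n → U) (idx : Fin m) (x' : U) :
    |mmdU k (Function.update X idx x') Y - mmdU k X Y|
      ≤ (4 * l / m) * ‖X idx - x'‖ := by
  rw [norm_sub_rev, ← sum_norm_update_sub X idx x']
  exact abs_mmdU_sub_le hk1 hk2 hm (by omega) X _ Y
end
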